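/- Let n > 0 be a real number, let (X,d,μ) be a metric measure space, let x ∈ X, R > 0, and suppose there are constants c, C > 0 such that c ≤ Θ_x(s) ≤ C for every s ∈ (0, R²]. Then there exist constants v, V > 0 depending only on n, c and C such that v·r^n ≤ μ(B_r(x)) ≤ V·r^n for every r ∈ (0, R]. -/

import Mathlib

open MeasureTheory Metric Filter Set
open scoped ENNReal

/-- The measure is finite and nonzero on every ball of positive radius. -/
def BallMeasureNontrivial {X : Type*} [MetricSpace X] [MeasurableSpace X]
    (μ : Measure X) : Prop :=
  ∀ (x : X) (r : ℝ), 0 < r → 0 < μ (ball x r) ∧ μ (ball x r) < ⊤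

/-- The `Θ`-volume `Θ_x(s) = (4πs)^{-n/2} ∫_X exp(−d(x,y)²/(4s)) dμ(y)`,
as an extended nonnegative real. -/
noncomputable def Theta {X : Type*} [MetricSpace X] [MeasurableSpace X] (μ : Measure X)
    (n : ℝ) (x : X) (s : ℝ) : ℝ≥0∞ :=
  ENNReal.ofReal ((4 * Real.pi * s) ^ (-(n / 2))) *
    ∫⁻ y, ENNReal.ofReal (Real.exp (-(dist x y) ^ 2 / (4 * s))) ∂μ

/-!
Write `G(s) = ∫ exp(-d(x,y)²/4s) dμ(y)`, so that `Θ_x(s) = (4πs)^{-n/2} G(s)`. On `B_r(x)` the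
Gaussian at scale `r²` is at least `e^{-1/4}`, whence `μ(B_r(x)) ≤ e^{1/4} G(r²) ≤ e^{1/4} C (4πr²)^{n/2}`.
For the lower bound compare the scales `r²/u` and `r²` for some `u ≥ 1`: off the ball the Gaussian at
scale `r²/u` is at most `e^{-(u-1)/4}` times the one at scale `r²`, so
`c (4πr²/u)^{n/2} ≤ G(r²/u) ≤ μ(B_r(x)) + e^{-(u-1)/4} C (4πr²)^{n/2}`.
Since `u^{n/2} e^{-(u-1)/4} → 0`, a large `u` depending only on `n, c, C` makes the last term at most
half the left-hand side.
-/

open Topology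

noncomputable def gaussianIntegral {X : Type*} [MetricSpace X] [MeasurableSpace X]
    (μ : Measure X) (x : X) (s : ℝ) : ℝ≥0∞ :=
  ∫⁻ y, ENNReal.ofReal (Real.exp (-(dist x y) ^ 2 / (4 * s))) ∂μ

lemma mul_sq_rpow_half {a r : ℝ} (ha : 0 ≤ a) (hr : 0 ≤ r) (n : ℝ) :
    (a * r ^ 2) ^ (n / 2) = a ^ (n / 2) * r ^ n := by
  rw [Real.mul_rpow ha (sq_nonneg r), ← Real.rpow_natCast, ← Real.rpow_mul hr]
  congr 2
  push_cast
  ring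

lemma tendsto_rpow_mul_exp_neg_sub_one_div_four_mul (a C : ℝ) :
    Tendsto (fun u : ℝ => u ^ a * Real.exp (-(u - 1) / 4) * C) atTop (𝓝 0) := by
  have h := ((tendsto_rpow_mul_exp_neg_mul_atTop_nhds_zero a (1 / 4) (by norm_num)).mul_const
    (Real.exp (1 / 4))).mul_const C
  rw [zero_mul, zero_mul] at h
  refine h.congr fun u => ?_
  rw [mul_assoc _ _ (Real.exp _), ← Real.exp_add]
  ring_nf

section

variable {X : Type*} [MetricSpace X] [MeasurableSpace X] (μ : Measure X) (x : X)

lemma theta_eq_gaussianIntegral_div {n s : ℝ} (hs : 0 < s) :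
    Theta μ n x s = gaussianIntegral μ x s / ENNReal.ofReal ((4 * Real.pi * s) ^ (n / 2)) := by
  rw [Theta, Real.rpow_neg (by positivity), ENNReal.ofReal_inv_of_pos (by positivity),
    mul_comm]
  rfl

lemma ofReal_le_theta_iff {n s : ℝ} (hs : 0 < s) (c : ℝ) :
    ENNReal.ofReal c ≤ Theta μ n x s ↔
      ENNReal.ofReal (c * (4 * Real.pi * s) ^ (n / 2)) ≤ gaussianIntegral μ x s := by
  have hq : 0 < (4 * Real.pi * s) ^ (n / 2) := by positivity
  rw [theta_eq_gaussianIntegral_div μ x hs, ENNReal.le_div_iff_mul_le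
    (.inl (ENNReal.ofReal_pos.2 hq).ne') (.inl ENNReal.ofReal_ne_top), ENNReal.ofReal_mul' hq.le]

lemma theta_le_ofReal_iff {n s : ℝ} (hs : 0 < s) (C : ℝ) :
    Theta μ n x s ≤ ENNReal.ofReal C ↔
      gaussianIntegral μ x s ≤ ENNReal.ofReal (C * (4 * Real.pi * s) ^ (n / 2)) := by
  have hq : 0 < (4 * Real.pi * s) ^ (n / 2) := by positivity
  rw [theta_eq_gaussianIntegral_div μ x hs, ENNReal.div_le_iff_le_mul
    (.inl (ENNReal.ofReal_pos.2 hq).ne') (.inl ENNReal.ofReal_ne_top), ENNReal.ofReal_mul' hq.le]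

variable [OpensMeasurableSpace X]

lemma ofReal_exp_mul_measure_ball_le_gaussianIntegral {s : ℝ} (hs : 0 ≤ s) (r : ℝ) :
    ENNReal.ofReal (Real.exp (-r ^ 2 / (4 * s))) * μ (ball x r) ≤ gaussianIntegral μ x s := by
  rw [← lintegral_indicator_const measurableSet_ball]
  refine lintegral_mono fun y => ?_
  by_cases hy : y ∈ ball x r
  · have hd : dist x y ^ 2 ≤ r ^ 2 := by
      rw [mem_ball, dist_comm] at hy
      exact pow_le_pow_left₀ dist_nonneg hy.le 2
    rw [indicator_of_mem hy]
    gcongr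
  · simp [indicator_of_notMem hy]

lemma gaussianIntegral_div_le_measure_ball_add {s u : ℝ} (hs : 0 < s) (hu : 1 ≤ u) {r : ℝ}
    (hr : 0 ≤ r) :
    gaussianIntegral μ x (s / u) ≤ μ (ball x r) +
      ENNReal.ofReal (Real.exp (-(u - 1) * r ^ 2 / (4 * s))) * gaussianIntegral μ x s := by
  rw [← lintegral_indicator_one measurableSet_ball, gaussianIntegral, gaussianIntegral,
    ← lintegral_const_mul' _ _ ENNReal.ofReal_ne_top,
    ← lintegral_add_left (measurable_one.indicator measurableSet_ball)]
  refine lintegral_mono fun y => ?_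
  by_cases hy : y ∈ ball x r
  · rw [indicator_of_mem hy, Pi.one_apply]
    refine le_add_right (ENNReal.ofReal_le_one.2 (Real.exp_le_one_iff.2 ?_))
    rw [neg_div]
    exact neg_nonpos.2 (by positivity)
  · have hd : r ^ 2 ≤ dist x y ^ 2 := by
      rw [mem_ball, dist_comm, not_lt] at hy
      exact pow_le_pow_left₀ hr hy 2
    rw [indicator_of_notMem hy, zero_add, ← ENNReal.ofReal_mul (Real.exp_pos _).le,
      ← Real.exp_add]
    gcongr
    have hscale : -dist x y ^ 2 / (4 * (s / u)) = -(u * dist x y ^ 2) / (4 * s) := by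
      field_simp
    rw [hscale, ← add_div, div_le_div_iff_of_pos_right (by positivity)]
    nlinarith [mul_le_mul_of_nonneg_left hd (sub_nonneg.2 hu)]

lemma measure_ball_le_of_theta_le {n C r : ℝ} (hr : 0 < r)
    (hΘ : Theta μ n x (r ^ 2) ≤ ENNReal.ofReal C) :
    μ (ball x r) ≤ ENNReal.ofReal (C * (4 * Real.pi) ^ (n / 2) * Real.exp (1 / 4) * r ^ n) := by
  have hG := (theta_le_ofReal_iff μ x (pow_pos hr 2) C).1 hΘ
  have hball := ofReal_exp_mul_measure_ball_le_gaussianIntegral μ x (sq_nonneg r) r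
  have hexp : -r ^ 2 / (4 * r ^ 2) = -(1 / 4) := by field_simp
  have hinv : ENNReal.ofReal (Real.exp (1 / 4)) * ENNReal.ofReal (Real.exp (-(1 / 4))) = 1 := by
    rw [← ENNReal.ofReal_mul (Real.exp_pos _).le, ← Real.exp_add, add_neg_cancel, Real.exp_zero,
      ENNReal.ofReal_one]
  calc μ (ball x r)
      = ENNReal.ofReal (Real.exp (1 / 4)) *
          (ENNReal.ofReal (Real.exp (-r ^ 2 / (4 * r ^ 2))) * μ (ball x r)) := by
        rw [hexp, ← mul_assoc, hinv, one_mul]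
    _ ≤ ENNReal.ofReal (Real.exp (1 / 4)) *
          ENNReal.ofReal (C * (4 * Real.pi * r ^ 2) ^ (n / 2)) := by gcongr; exact hball.trans hG
    _ = _ := by
        rw [← ENNReal.ofReal_mul (Real.exp_pos _).le, mul_sq_rpow_half (by positivity) hr.le]
        ring_nf

lemma ofReal_le_measure_ball_of_theta_bounds {n c C r u : ℝ} (hC : 0 ≤ C) (hr : 0 < r)
    (hu : 1 ≤ u)
    (hsmall : u ^ (n / 2) * Real.exp (-(u - 1) / 4) * C ≤ c / 2)
    (hlow : ENNReal.ofReal c ≤ Theta μ n x (r ^ 2 / u))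
    (hup : Theta μ n x (r ^ 2) ≤ ENNReal.ofReal C) :
    ENNReal.ofReal (c / 2 * (4 * Real.pi / u) ^ (n / 2) * r ^ n) ≤ μ (ball x r) := by
  have hu0 : 0 < u := by linarith
  set a := c * (4 * Real.pi / u) ^ (n / 2) * r ^ n with ha
  set b := Real.exp (-(u - 1) / 4) * C * (4 * Real.pi) ^ (n / 2) * r ^ n with hb
  have hlow' : ENNReal.ofReal a ≤ gaussianIntegral μ x (r ^ 2 / u) := by
    have h := (ofReal_le_theta_iff μ x (by positivity) c).1 hlow
    rwa [show 4 * Real.pi * (r ^ 2 / u) = 4 * Real.pi / u * r ^ 2 by ring,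
      mul_sq_rpow_half (by positivity) hr.le, ← mul_assoc] at h
  have hup' : ENNReal.ofReal (Real.exp (-(u - 1) * r ^ 2 / (4 * r ^ 2))) *
      gaussianIntegral μ x (r ^ 2) ≤ ENNReal.ofReal b := by
    have h := (theta_le_ofReal_iff μ x (pow_pos hr 2) C).1 hup
    rw [mul_sq_rpow_half (by positivity) hr.le] at h
    have hexp : -(u - 1) * r ^ 2 / (4 * r ^ 2) = -(u - 1) / 4 := by field_simp
    calc _ ≤ ENNReal.ofReal (Real.exp (-(u - 1) / 4)) *
          ENNReal.ofReal (C * ((4 * Real.pi) ^ (n / 2) * r ^ n)) := by rw [hexp]; gcongr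
      _ = ENNReal.ofReal b := by rw [← ENNReal.ofReal_mul (Real.exp_pos _).le, hb]; ring_nf
  have hba : b ≤ a / 2 := by
    have hU : 0 < u ^ (n / 2) := by positivity
    calc b = u ^ (n / 2) * Real.exp (-(u - 1) / 4) * C *
          ((4 * Real.pi) ^ (n / 2) * r ^ n / u ^ (n / 2)) := by rw [hb]; field_simp
      _ ≤ c / 2 * ((4 * Real.pi) ^ (n / 2) * r ^ n / u ^ (n / 2)) := by gcongr
      _ = a / 2 := by rw [ha, Real.div_rpow (by positivity) hu0.le]; ring
  calc ENNReal.ofReal (c / 2 * (4 * Real.pi / u) ^ (n / 2) * r ^ n)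
      ≤ ENNReal.ofReal (a - b) := ENNReal.ofReal_le_ofReal (by linarith)
    _ = ENNReal.ofReal a - ENNReal.ofReal b := ENNReal.ofReal_sub _ (by positivity)
    _ ≤ μ (ball x r) := by
        rw [tsub_le_iff_right]
        exact hlow'.trans ((gaussianIntegral_div_le_measure_ball_add μ x (pow_pos hr 2) hu
          hr.le).trans (add_le_add le_rfl hup'))

end

theorem theta_volume_bounds_ball_measure_general (n c C : ℝ) (hc : 0 < c) (hC : 0 < C) :
    ∃ v V : ℝ, 0 < v ∧ 0 < V ∧
      ∀ (X : Type) [MetricSpace X] [MeasurableSpace X] [BorelSpace X]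
        (μ : Measure X), BallMeasureNontrivial μ →
        ∀ (x : X) (R : ℝ), 0 < R →
          (∀ s : ℝ, 0 < s → s ≤ R ^ 2 →
            ENNReal.ofReal c ≤ Theta μ n x s ∧ Theta μ n x s ≤ ENNReal.ofReal C) →
          ∀ r : ℝ, 0 < r → r ≤ R →
            ENNReal.ofReal (v * r ^ n) ≤ μ (ball x r) ∧
              μ (ball x r) ≤ ENNReal.ofReal (V * r ^ n) := by
  obtain ⟨u, hsmall, hu⟩ := (((tendsto_rpow_mul_exp_neg_sub_one_div_four_mul (n / 2) C).eventually
    (eventually_le_nhds (half_pos hc))).and (eventually_ge_atTop 1)).exists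
  have hu0 : 0 < u := by linarith
  refine ⟨c / 2 * (4 * Real.pi / u) ^ (n / 2), C * (4 * Real.pi) ^ (n / 2) * Real.exp (1 / 4),
    by positivity, by positivity, ?_⟩
  intro X _ _ _ μ _ x R _ hΘ r hr hrR
  have hr2 : r ^ 2 ≤ R ^ 2 := pow_le_pow_left₀ hr.le hrR 2
  have hΘr := hΘ (r ^ 2) (by positivity) hr2
  have hΘru := hΘ (r ^ 2 / u) (by positivity) ((div_le_self (sq_nonneg r) hu).trans hr2)
  exact ⟨ofReal_le_measure_ball_of_theta_bounds μ x hC.le hr hu hsmall hΘru.1 hΘr.2,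
    measure_ball_le_of_theta_le μ x hr hΘr.2⟩

/-- If `c ≤ Θ_x(s) ≤ C` for all `s ∈ (0,R²]`, then `v·r^n ≤ μ(B_r(x)) ≤ V·r^n` for all
`r ∈ (0,R]`, where `v, V > 0` depend only on `n`, `c` and `C`. -/
theorem theta_volume_bounds_ball_measure (n c C : ℝ) (hn : 0 < n) (hc : 0 < c) (hC : 0 < C) :
    ∃ v V : ℝ, 0 < v ∧ 0 < V ∧
      ∀ (X : Type) [MetricSpace X] [MeasurableSpace X] [BorelSpace X]
        (μ : Measure X), BallMeasureNontrivial μ →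
        ∀ (x : X) (R : ℝ), 0 < R →
          (∀ s : ℝ, 0 < s → s ≤ R ^ 2 →
            ENNReal.ofReal c ≤ Theta μ n x s ∧ Theta μ n x s ≤ ENNReal.ofReal C) →
          ∀ r : ℝ, 0 < r → r ≤ R →
            ENNReal.ofReal (v * r ^ n) ≤ μ (ball x r) ∧
              μ (ball x r) ≤ ENNReal.ofReal (V * r ^ n) :=
  theta_volume_bounds_ball_measure_general n c C hc hC
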